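/- The shear-coordinate Whitehead moves satisfy the pentagon relation: for the transformation of seven coordinates (z^α,...,z^η) under the five Whitehead moves along the edges ζ and η as in the pentagon sequence, the composite W_ζ ∘ W_η ∘ W_ζ ∘ W_η ∘ W_ζ equals the transposition exchanging the coordinates z^ζ and z^η. Concretely, the explicit composition of the five coordinate transformations given by z ↦ −z on the flipped edge and z ↦ z ± log(1+e^{±z_flip}) on adjacent edges returns all coordinates to their initial values with z^ζ and z^η swapped. -/
import Mathlib


/-- A Whitehead move (wflip) along the edge in slot `i` of seven coordinates: the
coordinate of `i` changes sign, the edges in `P` gain `log(1+e^{zᵢ})` and the edges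
in `M` lose `log(1+e^{−zᵢ})`. -/
noncomputable def wflip (i : Fin 7) (P M : Finset (Fin 7)) (z : Fin 7 → ℝ) :
    Fin 7 → ℝ := fun j =>
  if j = i then -z i
  else z j + (if j ∈ P then Real.log (1 + Real.exp (z i)) else 0)
           - (if j ∈ M then Real.log (1 + Real.exp (-z i)) else 0)

section helpers

open Real

lemma exp_log1p (x : ℝ) : Real.exp (Real.log (1 + Real.exp x)) = 1 + Real.exp x :=
  Real.exp_log (by positivity)

lemma expS (a b : ℝ) :
    Real.exp (Real.log (1 + Real.exp (b + Real.log (1 + Real.exp a))))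
      = 1 + Real.exp b + Real.exp a * Real.exp b := by
  rw [exp_log1p, Real.exp_add, exp_log1p]; ring

lemma logS (a b : ℝ) :
    Real.log (1 + Real.exp b + Real.exp a * Real.exp b)
      = Real.log (1 + Real.exp (b + Real.log (1 + Real.exp a))) := by
  rw [← expS a b, Real.log_exp]

lemma W1 (x : ℝ) :
    Real.log (1 + Real.exp (-x)) = Real.log (1 + Real.exp x) - x := by
  have h : (1 : ℝ) + Real.exp (-x) = (1 + Real.exp x) * Real.exp (-x) := by
    rw [Real.exp_neg]
    field_simp
    try ring
  rw [h, Real.log_mul (by positivity) (Real.exp_ne_zero _), Real.log_exp]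
  ring

lemma W2 (a b : ℝ) :
    Real.log (1 + Real.exp (-a + Real.log (1 + Real.exp (b + Real.log (1 + Real.exp a)))))
      = Real.log (1 + Real.exp a) + Real.log (1 + Real.exp b) - a := by
  have h : (1 : ℝ) + Real.exp (-a + Real.log (1 + Real.exp (b + Real.log (1 + Real.exp a))))
      = (1 + Real.exp a) * (1 + Real.exp b) * Real.exp (-a) := by
    rw [Real.exp_add, expS, Real.exp_neg]
    field_simp
    try ring
  rw [h, Real.log_mul (by positivity) (Real.exp_ne_zero _),
      Real.log_mul (by positivity) (by positivity), Real.log_exp]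
  ring

lemma W3 (a b : ℝ) :
    Real.log (1 + Real.exp (-Real.log (1 + Real.exp (b + Real.log (1 + Real.exp a))) + a))
      = Real.log (1 + Real.exp a) + Real.log (1 + Real.exp b)
        - Real.log (1 + Real.exp (b + Real.log (1 + Real.exp a))) := by
  have hp : (0 : ℝ) < 1 + Real.exp b + Real.exp a * Real.exp b := by positivity
  have h : (1 : ℝ) + Real.exp (-Real.log (1 + Real.exp (b + Real.log (1 + Real.exp a))) + a)
      = (1 + Real.exp a) * (1 + Real.exp b)
        * Real.exp (-Real.log (1 + Real.exp (b + Real.log (1 + Real.exp a)))) := by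
    rw [Real.exp_add, Real.exp_neg, expS]
    field_simp
    try ring
  rw [h, Real.log_mul (by positivity) (Real.exp_ne_zero _),
      Real.log_mul (by positivity) (by positivity), Real.log_exp]
  ring

lemma W4 (a b : ℝ) :
    Real.log (1 + Real.exp (-Real.log (1 + Real.exp a) + -b))
      = Real.log (1 + Real.exp (b + Real.log (1 + Real.exp a))) - b
        - Real.log (1 + Real.exp a) := by
  have h : (1 : ℝ) + Real.exp (-Real.log (1 + Real.exp a) + -b)
      = (1 + Real.exp b + Real.exp a * Real.exp b)
        * ((1 + Real.exp a)⁻¹ * Real.exp (-b)) := by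
    rw [Real.exp_add, Real.exp_neg, exp_log1p, Real.exp_neg]
    have ha : (0 : ℝ) < 1 + Real.exp a := by positivity
    field_simp
    try ring
  rw [h, Real.log_mul (by positivity) (by positivity),
      Real.log_mul (by positivity) (Real.exp_ne_zero _),
      Real.log_inv, Real.log_exp, logS]
  ring

lemma W5core (a b : ℝ) :
    Real.log (1 + Real.exp (Real.log (1 + Real.exp b) - a - b))
      = Real.log (1 + Real.exp (b + Real.log (1 + Real.exp a))) - a - b := by
  have h : (1 : ℝ) + Real.exp (Real.log (1 + Real.exp b) - a - b)
      = (1 + Real.exp b + Real.exp a * Real.exp b) * Real.exp (-a - b) := by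
    rw [show Real.log (1 + Real.exp b) - a - b = Real.log (1 + Real.exp b) + (-a - b) by ring,
        Real.exp_add, exp_log1p, show (-a - b : ℝ) = -(a + b) by ring, Real.exp_neg,
        Real.exp_add]
    field_simp
    try ring
  rw [h, Real.log_mul (by positivity) (Real.exp_ne_zero _), Real.log_exp, logS]
  ring

lemma W5 (a b : ℝ) :
    Real.log (1 + Real.exp (-Real.log (1 + Real.exp a) + -b
        + (Real.log (1 + Real.exp a) + Real.log (1 + Real.exp b) - a)))
      = Real.log (1 + Real.exp (b + Real.log (1 + Real.exp a))) - a - b := by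
  rw [show -Real.log (1 + Real.exp a) + -b
        + (Real.log (1 + Real.exp a) + Real.log (1 + Real.exp b) - a)
      = Real.log (1 + Real.exp b) - a - b by ring, W5core]

lemma W6 (a b : ℝ) :
    Real.log (1 + Real.exp
        (-(Real.log (1 + Real.exp (b + Real.log (1 + Real.exp a))) - a - b)
          + (-a + Real.log (1 + Real.exp (b + Real.log (1 + Real.exp a))))))
      = Real.log (1 + Real.exp b) := by
  rw [show -(Real.log (1 + Real.exp (b + Real.log (1 + Real.exp a))) - a - b)
          + (-a + Real.log (1 + Real.exp (b + Real.log (1 + Real.exp a)))) = b by ring]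

lemma W7 (a b : ℝ) :
    Real.log (1 + Real.exp
        (-Real.log (1 + Real.exp (b + Real.log (1 + Real.exp a))) + a
          + (Real.log (1 + Real.exp (b + Real.log (1 + Real.exp a))) - a - b)))
      = Real.log (1 + Real.exp b) - b := by
  rw [show -Real.log (1 + Real.exp (b + Real.log (1 + Real.exp a))) + a
          + (Real.log (1 + Real.exp (b + Real.log (1 + Real.exp a))) - a - b) = -b by ring, W1]

lemma W8 (a b : ℝ) :
    Real.log (1 + Real.exp
        (-(Real.log (1 + Real.exp a) + Real.log (1 + Real.exp b) - a)
          + (b + Real.log (1 + Real.exp a))))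
      = Real.log (1 + Real.exp (b + Real.log (1 + Real.exp a)))
        - Real.log (1 + Real.exp b) := by
  have harg : -(Real.log (1 + Real.exp a) + Real.log (1 + Real.exp b) - a)
          + (b + Real.log (1 + Real.exp a)) = a + b - Real.log (1 + Real.exp b) := by ring
  have hb : (0 : ℝ) < 1 + Real.exp b := by positivity
  have h : (1 : ℝ) + Real.exp (a + b - Real.log (1 + Real.exp b))
      = (1 + Real.exp b + Real.exp a * Real.exp b) * (1 + Real.exp b)⁻¹ := by
    rw [Real.exp_sub, Real.exp_add, exp_log1p]
    field_simp
    try ring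
  rw [harg, h, Real.log_mul (by positivity) (by positivity), Real.log_inv, logS]
  ring

end helpers

/-- The pentagon relation: with coordinates indexed as
`α=0, β=1, γ=2, δ=3, ε=4, ζ=5, η=6`, the composite of the five Whitehead moves of the
pentagon sequence (alternately along `ζ` and `η`, with the adjacency patterns of the
pentagon configuration) equals the transposition exchanging the coordinates `z^ζ`
and `z^η`. -/
theorem stmt_11 (z : Fin 7 → ℝ) :
    wflip 5 {2, 6} {1, 3}
      (wflip 6 {4, 5} {0, 3}
        (wflip 5 {1, 6} {0, 2}
          (wflip 6 {3, 5} {2, 4}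
            (wflip 5 {0, 6} {1, 4} z))))
      = fun j => z (Equiv.swap (5 : Fin 7) 6 j) := by
  funext j
  fin_cases j <;> simp [wflip, Equiv.swap_apply_def]
  · rw [W2, W3, W8]; try linarith
  · rw [W1, W2, W5, W6]; try linarith
  · rw [W2, W4, W5, W3, W7]; try linarith
  · rw [W2, W5, W6, W8]; try linarith
  · rw [W1, W2, W4, W5]; try linarith
  · rw [W2, W5]; try linarith
  · rw [W2, W5, W7]; try linarith
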